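/- arXiv:1310.4367 — 3 statements merged into one kernel-verified Lean document; each statement's English description precedes it below -/
import Mathlib

section
/- Let w be a finite word over alphabet \Gamma with no two equal adjacent letters, of length n \geq 1. Then there is a partition of \Gamma into \Gamma_1 and \Gamma_2 such that the number of positions i with w_i \in \Gamma_1 and w_{i+1} \in \Gamma_2 is at least (n-1)/4. -/
/-!
Averaging over all subsets `Γ₁ ⊆ Γ`, with `Γ₂ = Γ \ Γ₁`: a pair `(a, b)` of distinct letters has
`a ∈ Γ₁` and `b ∉ Γ₁` for exactly a quarter of the subsets, so some subset separates at least a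
quarter of the `n - 1` adjacent pairs of `w`.
-/

open Finset

theorem List.IsChain.rel_of_mem_zip_tail {α : Type*} {R : α → α → Prop} {l : List α}
    (h : l.IsChain R) : ∀ p ∈ l.zip l.tail, R p.1 p.2 := by
  induction h with
  | nil | singleton => simp
  | cons_cons hr _ ih =>
    simp only [List.tail_cons, List.zip_cons_cons, List.mem_cons, forall_eq_or_imp]
    exact ⟨hr, ih⟩

namespace Finset

variable {α : Type*} [DecidableEq α]

theorem four_mul_card_filter_mem_notMem_powerset {s : Finset α} {a b : α} (ha : a ∈ s)
    (hb : b ∈ s) (hab : a ≠ b) :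
    4 * #{t ∈ s.powerset | a ∈ t ∧ b ∉ t} = 2 ^ #s := by
  set u := (s.erase a).erase b
  have hu : #u + 2 = #s := by
    rw [card_erase_of_mem (mem_erase.2 ⟨hab.symm, hb⟩), card_erase_of_mem ha]
    have := one_lt_card.2 ⟨a, ha, b, hb, hab⟩
    omega
  have hbij : #{t ∈ s.powerset | a ∈ t ∧ b ∉ t} = #u.powerset := by
    refine card_bij' (fun t _ => t.erase a) (fun t _ => insert a t) ?_ ?_ ?_ ?_ <;>
      intro t ht <;> simp only [mem_filter, mem_powerset, subset_iff, u] at ht ⊢ <;> grind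
  rw [hbij, card_powerset, ← hu, pow_add]
  ring

theorem four_mul_sum_powerset_countP_mem_notMem {s : Finset α} {l : List (α × α)}
    (hl : ∀ p ∈ l, p.1 ∈ s ∧ p.2 ∈ s ∧ p.1 ≠ p.2) :
    4 * ∑ t ∈ s.powerset, l.countP (fun p => p.1 ∈ t ∧ p.2 ∉ t) = l.length * 2 ^ #s := by
  induction l with
  | nil => simp
  | cons p l ih =>
    obtain ⟨hp₁, hp₂, hp⟩ := hl p List.mem_cons_self
    have ih := ih fun q hq => hl q (List.mem_cons_of_mem _ hq)
    simp only [List.countP_cons, sum_add_distrib, mul_add, ih, decide_eq_true_eq, sum_boole,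
      Nat.cast_id, four_mul_card_filter_mem_notMem_powerset hp₁ hp₂ hp, List.length_cons]
    ring

theorem exists_subset_length_le_four_mul_countP_mem_notMem {s : Finset α} {l : List (α × α)}
    (hl : ∀ p ∈ l, p.1 ∈ s ∧ p.2 ∈ s ∧ p.1 ≠ p.2) :
    ∃ t ⊆ s, l.length ≤ 4 * l.countP (fun p => p.1 ∈ t ∧ p.2 ∉ t) := by
  obtain ⟨t, ht, hle⟩ := exists_le_of_sum_le s.powerset_nonempty
    (f := fun _ => l.length) (g := fun t => 4 * l.countP (fun p => p.1 ∈ t ∧ p.2 ∉ t)) <| by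
      rw [← mul_sum, four_mul_sum_powerset_countP_mem_notMem hl, sum_const, card_powerset,
        smul_eq_mul, mul_comm]
  exact ⟨t, mem_powerset.1 ht, hle⟩

end Finset

theorem stmt_4_general {α : Type*} [DecidableEq α] (Γ : Finset α) (w : List α)
    (hmem : ∀ a ∈ w, a ∈ Γ)
    (hadj : List.Chain' (· ≠ ·) w) :
    ∃ Γ1 Γ2 : Finset α, Disjoint Γ1 Γ2 ∧ Γ1 ∪ Γ2 = Γ ∧
      w.length - 1 ≤
        4 * ((w.zip w.tail).filter fun p => decide (p.1 ∈ Γ1 ∧ p.2 ∈ Γ2)).length := by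
  have hpairs : ∀ p ∈ w.zip w.tail, p.1 ∈ Γ ∧ p.2 ∈ Γ ∧ p.1 ≠ p.2 := fun p hp =>
    ⟨hmem _ (List.of_mem_zip hp).1, hmem _ (List.mem_of_mem_tail (List.of_mem_zip hp).2),
      List.IsChain.rel_of_mem_zip_tail hadj p hp⟩
  obtain ⟨Γ1, hΓ1, hcut⟩ := exists_subset_length_le_four_mul_countP_mem_notMem hpairs
  refine ⟨Γ1, Γ \ Γ1, disjoint_sdiff, union_sdiff_of_subset hΓ1, ?_⟩
  have hlen : (w.zip w.tail).length = w.length - 1 := by simp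
  rw [← hlen, ← List.countP_eq_length_filter]
  convert hcut using 2
  refine List.countP_congr fun p hp => ?_
  simp [(hpairs p hp).2.1]

/-- if `w` is a nonempty word over `Γ` with no two equal adjacent letters,
then some partition of `Γ` into `Γ₁, Γ₂` covers at least `(n-1)/4` of the `n-1`
adjacent pairs, i.e. `n - 1 ≤ 4 · #covered positions`. -/
theorem stmt_4 {α : Type*} [DecidableEq α] (Γ : Finset α) (w : List α)
    (hlen : 1 ≤ w.length) (hmem : ∀ a ∈ w, a ∈ Γ)
    (hadj : List.Chain' (· ≠ ·) w) :
    ∃ Γ1 Γ2 : Finset α, Disjoint Γ1 Γ2 ∧ Γ1 ∪ Γ2 = Γ ∧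
      w.length - 1 ≤
        4 * ((w.zip w.tail).filter fun p => decide (p.1 ∈ Γ1 ∧ p.2 ∈ Γ2)).length :=
  stmt_4_general Γ w hmem hadj
end

section
/- If a word equation u = v has a solution S with S(x) beginning with letter a for a fixed variable x, then the equation obtained by replacing every occurrence of x with a·x has a solution S' (namely S'(x) is S(x) with its first letter removed, and S' agrees with S elsewhere, treating x-images as possibly empty) satisfying S'(transformed u) = S(u). -/
/-- Homomorphic application of a substitution (variables may map to empty words). -/
def subst {σ V : Type*} (S : V → List σ) (u : List (σ ⊕ V)) : List σ :=
  u.flatMap fun s => match s with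
    | Sum.inl a => [a]
    | Sum.inr x => S x

/-- Replace every occurrence of the variable `x` by `a · x`. -/
def popLeft {σ V : Type*} [DecidableEq V] (a : σ) (x : V) (u : List (σ ⊕ V)) :
    List (σ ⊕ V) :=
  u.flatMap fun s => match s with
    | Sum.inl b => [Sum.inl b]
    | Sum.inr y => if y = x then [Sum.inl a, Sum.inr x] else [Sum.inr y]

lemma subst_pop {σ V : Type*} [DecidableEq V] (a : σ) (x : V)
    (S : V → List σ) (t : List σ) (hx : S x = a :: t) (u : List (σ ⊕ V)) :
    subst (Function.update S x t) (popLeft a x u) = subst S u := by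
  induction u with
  | nil => rfl
  | cons s rest ih =>
    cases s with
    | inl b => simpa [subst, popLeft] using ih
    | inr y =>
      by_cases h : y = x <;>
        simp_all [subst, popLeft, Function.update_apply, hx]

/-- completeness of popping a letter: if `S` solves `u = v` and `S x`
begins with the letter `a`, then `S' = S[x ↦ (S x).tail]` solves the equation obtained
by replacing `x` with `a · x`, and `S'(transformed u) = S(u)`. -/
theorem stmt_8 {σ V : Type*} [DecidableEq V] (u v : List (σ ⊕ V)) (a : σ) (x : V)
    (S : V → List σ) (hsol : subst S u = subst S v) (t : List σ) (hx : S x = a :: t) :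
    subst (Function.update S x t) (popLeft a x u) = subst S u ∧
    subst (Function.update S x t) (popLeft a x u) =
      subst (Function.update S x t) (popLeft a x v) := by
  rw [subst_pop a x S t hx, subst_pop a x S t hx]
  exact ⟨rfl, hsol⟩
end

section
/- Deleting a unary letter not occurring in the equation preserves solvability and does not increase solution size: if S solves the context equation u = v and the unary letter a does not occur in u = v, then the substitution S' obtained by deleting every a-labelled node from each S(X) and S(x) (splicing the unique child to the parent) is also a solution, and |S'(u)| \leq |S(u)|. -/
/-! Deleting `a` commutes with evaluation: it distributes over every node whose label is
not `a`, and over plugging a term into the hole of a context. Since `a` does not occur in `u`,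
every node of `u` is of that kind, so `S'(u)` is `S(u)` with its `a`-nodes deleted. Hence
`S(u) = S(v)` gives `S'(u) = S'(v)`, and `|S'(u)| ≤ |S(u)|` because deletion never adds
nodes. -/

/-- Ground terms over an alphabet. -/
inductive Term (α : Type) : Type
  | node : α → List (Term α) → Term α

/-- Ground contexts: exactly one occurrence of the hole, by construction. -/
inductive GCtx (α : Type) : Type
  | hole : GCtx α
  | node : α → List (Term α) → GCtx α → List (Term α) → GCtx α

/-- Substituting a ground term for the hole of a ground context. -/
def GCtx.app {α : Type} : GCtx α → Term α → Term α
  | .hole, t => t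
  | .node a l c r, t => .node a (l ++ GCtx.app c t :: r)

/-- Terms over the alphabet, first-order variables (`va`), and context variables
(`cv`, of arity one). -/
inductive CT (α V C : Type) : Type
  | va : V → CT α V C
  | cv : C → CT α V C → CT α V C
  | fn : α → List (CT α V C) → CT α V C

/-- Evaluation of a term with variables under a substitution assigning ground terms
to variables and ground contexts to context variables. -/
def ev {α V C : Type} (Sv : V → Term α) (Sc : C → GCtx α) : CT α V C → Term α
  | .va x => Sv x
  | .cv X s => (Sc X).app (ev Sv Sc s)
  | .fn f ts => .node f (ts.attach.map fun t => ev Sv Sc t.1)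
decreasing_by
  all_goals try have h := List.sizeOf_lt_of_mem t.2
  all_goals simp_wf
  all_goals omega

/-- The list of letters occurring in a ground term. -/
def lettersT {α : Type} : Term α → List α
  | .node g ts => g :: (ts.attach.map fun t => lettersT t.1).flatten
decreasing_by
  all_goals try have h := List.sizeOf_lt_of_mem t.2
  all_goals simp_wf
  all_goals omega

/-- The number of nodes of a ground term. -/
def sizeT {α : Type} : Term α → ℕ
  | .node _ ts => 1 + (ts.attach.map fun t => sizeT t.1).sum
decreasing_by
  all_goals try have h := List.sizeOf_lt_of_mem t.2
  all_goals simp_wf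
  all_goals omega

/-- The list of letters occurring in a ground context. -/
def lettersG {α : Type} : GCtx α → List α
  | .hole => []
  | .node g l c r =>
      g :: ((l.map lettersT).flatten ++ lettersG c ++ (r.map lettersT).flatten)

/-- Well-formedness of a ground term w.r.t. an arity function. -/
def wfT {α : Type} (ar : α → ℕ) : Term α → Prop
  | .node g ts =>
      ts.length = ar g ∧ ((ts.attach.map fun t => wfT ar t.1).foldr (· ∧ ·) True)
decreasing_by
  all_goals try have h := List.sizeOf_lt_of_mem t.2
  all_goals simp_wf
  all_goals omega

/-- Well-formedness of a ground context w.r.t. an arity function. -/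
def wfG {α : Type} (ar : α → ℕ) : GCtx α → Prop
  | .hole => True
  | .node g l c r =>
      l.length + 1 + r.length = ar g ∧ (∀ t ∈ l, wfT ar t) ∧ wfG ar c ∧
        (∀ t ∈ r, wfT ar t)

/-- The list of letters occurring in a term with variables. -/
def lettersCT {α V C : Type} : CT α V C → List α
  | .va _ => []
  | .cv _ s => lettersCT s
  | .fn f ts => f :: (ts.attach.map fun t => lettersCT t.1).flatten
decreasing_by
  all_goals try have h := List.sizeOf_lt_of_mem t.2
  all_goals simp_wf
  all_goals omega

/-- Deleting every node labelled by the unary letter `a` from a ground term: each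
subterm `a(t)` is replaced by `t` (the unique child is spliced to the parent). -/
def delA {α : Type} [DecidableEq α] (a : α) : Term α → Term α
  | .node g [t] => if g = a then delA a t else .node g [delA a t]
  | .node g ts => .node g (ts.attach.map fun t => delA a t.1)
decreasing_by
  all_goals try have hh := List.sizeOf_lt_of_mem t.2
  all_goals simp_wf
  all_goals omega

/-- Deleting every node labelled by the unary letter `a` from a ground context. -/
def delG {α : Type} [DecidableEq α] (a : α) : GCtx α → GCtx α
  | .hole => .hole
  | .node g [] c [] => if g = a then delG a c else .node g [] (delG a c) []
  | .node g l c r => .node g (l.map (delA a)) (delG a c) (r.map (delA a))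

theorem sizeT_node {α : Type} (g : α) (ts : List (Term α)) :
    sizeT (.node g ts) = 1 + (ts.map sizeT).sum := by
  rw [sizeT, List.map_attach_eq_pmap, List.pmap_eq_map]

section Deletion

variable {α : Type} [DecidableEq α] (a : α)

theorem delA_node_self_singleton (t : Term α) : delA a (.node a [t]) = delA a t := by
  rw [delA, if_pos rfl]

theorem delA_node_of_ne_singleton (g : α) {ts : List (Term α)} (hts : ∀ t, ts ≠ [t]) :
    delA a (.node g ts) = .node g (ts.map (delA a)) := by
  rw [delA, List.map_attach_eq_pmap, List.pmap_eq_map]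
  exact fun t h => hts t h

theorem delA_node_of_ne {g : α} (hg : g ≠ a) (ts : List (Term α)) :
    delA a (.node g ts) = .node g (ts.map (delA a)) := by
  by_cases hts : ∃ t, ts = [t]
  · obtain ⟨t, rfl⟩ := hts
    rw [delA, if_neg hg, List.map_singleton]
  · exact delA_node_of_ne_singleton a g (not_exists.mp hts)

theorem sizeT_delA_le (t : Term α) : sizeT (delA a t) ≤ sizeT t := by
  induction t using delA.induct a with
  | case1 t ih =>
    rw [delA_node_self_singleton, sizeT_node]
    simp only [List.map_cons, List.map_nil, List.sum_singleton]
    omega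
  | case2 g t hg ih =>
    rw [delA_node_of_ne a hg, sizeT_node, sizeT_node]
    simpa using ih
  | case3 g ts hts ih =>
    rw [delA_node_of_ne_singleton a g (fun t h => hts t h), sizeT_node, sizeT_node,
      List.map_map]
    have : (ts.map (sizeT ∘ delA a)).sum ≤ (ts.map sizeT).sum :=
      List.sum_le_sum fun t ht => ih ⟨t, ht⟩
    omega

theorem delG_node_of_ne_nil (g : α) {l r : List (Term α)} (c : GCtx α)
    (hlr : ¬(l = [] ∧ r = [])) :
    delG a (.node g l c r) = .node g (l.map (delA a)) (delG a c) (r.map (delA a)) := by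
  match l, r, hlr with
  | [], [], h => exact absurd ⟨rfl, rfl⟩ h
  | _ :: _, _, _ => rw [delG]; simp
  | [], _ :: _, _ => rw [delG]; simp

theorem delA_app (c : GCtx α) (t : Term α) :
    delA a (c.app t) = (delG a c).app (delA a t) := by
  induction c using delG.induct a with
  | case1 => rfl
  | case2 c ih =>
    rw [GCtx.app, delG, if_pos rfl, List.nil_append, delA_node_self_singleton, ih]
  | case3 g c hg ih =>
    simp only [GCtx.app, delG, if_neg hg, List.nil_append]
    rw [delA_node_of_ne a hg, List.map_singleton, ih]
  | case4 g l c r hlr ih =>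
    have hlen : ∀ s, l ++ c.app t :: r ≠ [s] := fun s h => by
      have := congrArg List.length h
      simp only [List.length_append, List.length_cons, List.length_nil] at this
      exact hlr (List.length_eq_zero_iff.mp (by omega)) (List.length_eq_zero_iff.mp (by omega))
    rw [GCtx.app, delG_node_of_ne_nil a g c (fun h => hlr h.1 h.2), GCtx.app,
      delA_node_of_ne_singleton a g hlen, List.map_append, List.map_cons, ih]

theorem ev_delete_eq_delA_ev {V C : Type} (Sv : V → Term α) (Sc : C → GCtx α)
    {u : CT α V C} (ha : a ∉ lettersCT u) :
    ev (fun x => delA a (Sv x)) (fun X => delG a (Sc X)) u = delA a (ev Sv Sc u) := by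
  induction u using ev.induct with
  | case1 x => rw [ev, ev]
  | case2 X s ih =>
    rw [lettersCT] at ha
    rw [ev, ev, delA_app, ih ha]
  | case3 f ts ih =>
    rw [lettersCT, List.mem_cons, not_or, List.mem_flatten, not_exists] at ha
    rw [ev, ev, delA_node_of_ne a (Ne.symm ha.1), List.map_map]
    congr 1
    exact List.map_congr_left fun t _ =>
      ih t fun hmem => ha.2 _ ⟨List.mem_map_of_mem (List.mem_attach _ t), hmem⟩

end Deletion

theorem stmt_18_general {α V C : Type} [DecidableEq α] (a : α)
    (u v : CT α V C) (Sv : V → Term α) (Sc : C → GCtx α)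
    (hau : a ∉ lettersCT u) (hav : a ∉ lettersCT v)
    (hsol : ev Sv Sc u = ev Sv Sc v) :
    ev (fun x => delA a (Sv x)) (fun X => delG a (Sc X)) u =
      ev (fun x => delA a (Sv x)) (fun X => delG a (Sc X)) v ∧
    sizeT (ev (fun x => delA a (Sv x)) (fun X => delG a (Sc X)) u) ≤
      sizeT (ev Sv Sc u) := by
  rw [ev_delete_eq_delA_ev a Sv Sc hau, ev_delete_eq_delA_ev a Sv Sc hav, hsol]
  exact ⟨rfl, sizeT_delA_le a _⟩

/-- if `S = (Sv, Sc)` solves the context equation `u = v` and the unary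
letter `a` does not occur in the equation, then deleting every `a`-labelled node from
all images of the (context) variables again yields a solution, whose size is not
larger. -/
theorem stmt_18 {α V C : Type} [DecidableEq α] (ar : α → ℕ) (a : α) (ha1 : ar a = 1)
    (u v : CT α V C) (Sv : V → Term α) (Sc : C → GCtx α)
    (hwf1 : ∀ x, wfT ar (Sv x)) (hwf2 : ∀ X, wfG ar (Sc X))
    (hau : a ∉ lettersCT u) (hav : a ∉ lettersCT v)
    (hsol : ev Sv Sc u = ev Sv Sc v) :
    ev (fun x => delA a (Sv x)) (fun X => delG a (Sc X)) u =
      ev (fun x => delA a (Sv x)) (fun X => delG a (Sc X)) v ∧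
    sizeT (ev (fun x => delA a (Sv x)) (fun X => delG a (Sc X)) u) ≤
      sizeT (ev Sv Sc u) :=
  stmt_18_general a u v Sv Sc hau hav hsol
end
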